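/- Let V₂⊗V₂ carry the action of pairs of 2×2 matrices via ρ₂⊗ρ₂. Then (i) the subspace of V₂⊗V₂ fixed by ρ₂(diag(λ, λ̄))⊗ρ₂(diag(λ, λ̄)) for all complex λ with |λ| = 1 equals the 3-dimensional span of z₀²⊗z₁², z₀z₁⊗z₀z₁, and z₁²⊗z₀²; and (ii) the subspace fixed by all these torus elements and additionally by ρ₂(J)⊗ρ₂(K), where J := [[0,1],[−1,0]] and K := [[0,i],[i,0]], equals the 2-dimensional span of z₀²⊗z₁² − z₁²⊗z₀² and z₀z₁⊗z₀z₁. -/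

import Mathlib

/-!
STATEMENT 16: In V₂⊗V₂ under ρ₂⊗ρ₂: (i) the vectors fixed by
ρ₂(diag(λ,λ̄))⊗ρ₂(diag(λ,λ̄)) for all |λ| = 1 form the 3-dimensional span of
z₀²⊗z₁², z₀z₁⊗z₀z₁, z₁²⊗z₀²; (ii) adding the element ρ₂(J)⊗ρ₂(K) cuts this
down to the 2-dimensional span of z₀²⊗z₁² − z₁²⊗z₀² and z₀z₁⊗z₀z₁.
-/

open MvPolynomial TensorProduct

noncomputable section

abbrev Mat2 : Type := Matrix (Fin 2) (Fin 2) ℂ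

abbrev P2 : Type := MvPolynomial (Fin 2) ℂ

/-- The substitution action `(ρ(g) f)(z₀,z₁) = f((z₀,z₁)g)`. -/
def polyAct (g : Mat2) : P2 →ₗ[ℂ] P2 :=
  (MvPolynomial.aeval
    (fun j : Fin 2 => ∑ i : Fin 2, MvPolynomial.C (g i j) * MvPolynomial.X i) :
      P2 →ₐ[ℂ] P2).toLinearMap

/-- The action ρ_l(A)⊗ρ_m(B) on V_l⊗V_m ⊆ P2 ⊗ P2. -/
def tAct (g h : Mat2) : P2 ⊗[ℂ] P2 →ₗ[ℂ] P2 ⊗[ℂ] P2 :=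
  TensorProduct.map (polyAct g) (polyAct h)

def Jmat : Mat2 := !![0, 1; -1, 0]
def Kmat : Mat2 := !![0, Complex.I; Complex.I, 0]

/-- The torus element diag(λ, λ̄). -/
def dmat (lam : ℂ) : Mat2 := !![lam, 0; 0, (starRingEnd ℂ) lam]

/-- The copy of V₂⊗V₂ inside P2 ⊗ P2. -/
def V22 : Submodule ℂ (P2 ⊗[ℂ] P2) :=
  LinearMap.range (TensorProduct.map
    (MvPolynomial.homogeneousSubmodule (Fin 2) ℂ 2).subtype
    (MvPolynomial.homogeneousSubmodule (Fin 2) ℂ 2).subtype)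

def u1 : P2 ⊗[ℂ] P2 := (X 0 ^ 2 : P2) ⊗ₜ[ℂ] (X 1 ^ 2 : P2)
def u2 : P2 ⊗[ℂ] P2 := (X 0 * X 1 : P2) ⊗ₜ[ℂ] (X 0 * X 1 : P2)
def u3 : P2 ⊗[ℂ] P2 := (X 1 ^ 2 : P2) ⊗ₜ[ℂ] (X 0 ^ 2 : P2)


/-!
`V₂ ⊗ V₂` is spanned by the monomial tensors `X a X b ⊗ X c X d`, and for `‖λ‖ = 1` (so that
`λ̄ = λ⁻¹`) the element `diag(λ, λ̄)` scales such a tensor by `λ ^ k`, where `k ∈ [-4, 4]` is the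
number of factors `X 0` minus the number of factors `X 1`. For a primitive 8th root of unity `ζ`,
`ζ ^ k = 1` forces `k = 0`; as eigenspaces of one operator are independent, a vector fixed by
this single torus element already lies in the span of the weight-zero tensors `u1`, `u2`, `u3`.
On that span `J ⊗ K` acts by `u1 ↦ -u3`, `u2 ↦ u2`, `u3 ↦ -u1`, with eigenbasis `u1 - u3`, `u2`
(eigenvalue `1`) and `u1 + u3` (eigenvalue `-1`).
-/

open Submodule

theorem Module.End.mem_span_image_of_mem_eigenspace {K V ι : Type*} [Field K]
    [AddCommGroup V] [Module K V] (f : Module.End K V) (v : ι → V) (μ : ι → K)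
    (hv : ∀ i, f (v i) = μ i • v i) {c : K} {w : V} (hw : w ∈ span K (Set.range v))
    (hc : w ∈ f.eigenspace c) : w ∈ span K (v '' {i | μ i = c}) := by
  rw [← Set.image_univ, ← Set.union_compl_self {i | μ i = c}, Set.image_union, span_union,
    mem_sup] at hw
  obtain ⟨a, ha, b, hb, rfl⟩ := hw
  have ha_c : a ∈ f.eigenspace c := span_le.mpr (by
    rintro _ ⟨i, hi, rfl⟩
    exact Module.End.mem_eigenspace_iff.mpr (hi ▸ hv i)) ha
  have hb_c : b ∈ f.eigenspace c := by simpa using sub_mem hc ha_c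
  have hb_other : b ∈ ⨆ (μ' : K) (_ : μ' ≠ c), f.eigenspace μ' := span_le.mpr (by
    rintro _ ⟨i, hi, rfl⟩
    exact mem_iSup_of_mem (μ i) (mem_iSup_of_mem hi (Module.End.mem_eigenspace_iff.mpr (hv i))))
    hb
  rw [disjoint_def.mp (Module.End.eigenspaces_iSupIndep f c) b hb_c hb_other, add_zero]
  exact ha

theorem MvPolynomial.homogeneousSubmodule_two_eq_span (σ R : Type*) [CommSemiring R] :
    homogeneousSubmodule σ R 2 =
      span R (Set.range fun p : σ × σ => (X p.1 * X p.2 : MvPolynomial σ R)) := by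
  rw [← homogeneousSubmodule_one_pow, homogeneousSubmodule_one_eq_span_X, pow_two, span_mul_span]
  congr 1
  ext
  simp [Set.mem_mul]

def quadTensor (p : (Fin 2 × Fin 2) × (Fin 2 × Fin 2)) : P2 ⊗[ℂ] P2 :=
  (X p.1.1 * X p.1.2 : P2) ⊗ₜ[ℂ] (X p.2.1 * X p.2.2 : P2)

theorem V22_eq_span_quadTensor : V22 = span ℂ (Set.range quadTensor) := by
  rw [V22, TensorProduct.range_map, range_subtype, homogeneousSubmodule_two_eq_span,
    map₂_span_span, Set.image2_range]
  rfl

def torusWeight : Fin 2 → ℤ := ![1, -1]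

def quadWeight (p : (Fin 2 × Fin 2) × (Fin 2 × Fin 2)) : ℤ :=
  torusWeight p.1.1 + torusWeight p.1.2 + torusWeight p.2.1 + torusWeight p.2.2

theorem polyAct_mul (g : Mat2) (p q : P2) : polyAct g (p * q) = polyAct g p * polyAct g q :=
  map_mul (aeval _) p q

theorem polyAct_dmat_X {l : ℂ} (hl : ‖l‖ = 1) (a : Fin 2) :
    polyAct (dmat l) (X a) = l ^ torusWeight a • X a := by
  fin_cases a <;> simp [polyAct, dmat, torusWeight, smul_eq_C_mul, ← Complex.inv_eq_conj hl]

theorem tAct_dmat_quadTensor {l : ℂ} (hl : ‖l‖ = 1) (p : (Fin 2 × Fin 2) × (Fin 2 × Fin 2)) :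
    tAct (dmat l) (dmat l) (quadTensor p) = l ^ quadWeight p • quadTensor p := by
  have hl0 : l ≠ 0 := norm_ne_zero_iff.mp (by simp [hl])
  simp only [tAct, quadTensor, map_tmul, polyAct_mul, polyAct_dmat_X hl, smul_mul_smul,
    tmul_smul, smul_tmul', smul_smul, quadWeight, zpow_add₀ hl0]
  ring_nf

theorem quadWeight_eq_zero_of_zpow_eq_one {ζ : ℂ} (hζ : IsPrimitiveRoot ζ 8)
    {p : (Fin 2 × Fin 2) × (Fin 2 × Fin 2)} (h : ζ ^ quadWeight p = 1) : quadWeight p = 0 := by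
  have hw : ∀ a, torusWeight a = 1 ∨ torusWeight a = -1 := by
    intro a
    fin_cases a <;> simp [torusWeight]
  rw [hζ.zpow_eq_one_iff_dvd] at h
  have := hw p.1.1; have := hw p.1.2; have := hw p.2.1; have := hw p.2.2
  unfold quadWeight at h ⊢
  omega

theorem quadTensor_mem_of_quadWeight_eq_zero {p : (Fin 2 × Fin 2) × (Fin 2 × Fin 2)}
    (h : quadWeight p = 0) : quadTensor p ∈ ({u1, u2, u3} : Set (P2 ⊗[ℂ] P2)) := by
  obtain ⟨⟨a, b⟩, c, d⟩ := p
  fin_cases a <;> fin_cases b <;> fin_cases c <;> fin_cases d <;>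
    simp_all [quadWeight, torusWeight, quadTensor, u1, u2, u3, sq, mul_comm]

theorem span_u_eq_span_quadTensor_weight_zero :
    span ℂ {u1, u2, u3} = span ℂ (quadTensor '' {p | quadWeight p = 0}) := by
  refine le_antisymm (span_mono ?_) (span_le.mpr ?_)
  · rintro _ (rfl | rfl | rfl)
    · exact ⟨((0, 0), (1, 1)), by simp [quadWeight, torusWeight], by simp [quadTensor, u1, sq]⟩
    · exact ⟨((0, 1), (0, 1)), by simp [quadWeight, torusWeight], by simp [quadTensor, u2]⟩
    · exact ⟨((1, 1), (0, 0)), by simp [quadWeight, torusWeight], by simp [quadTensor, u3, sq]⟩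
  · rintro _ ⟨p, hp, rfl⟩
    exact subset_span (quadTensor_mem_of_quadWeight_eq_zero hp)

theorem mem_span_u_iff (w : P2 ⊗[ℂ] P2) : w ∈ span ℂ {u1, u2, u3} ↔
    w ∈ V22 ∧ ∀ l : ℂ, ‖l‖ = 1 → tAct (dmat l) (dmat l) w = w := by
  rw [span_u_eq_span_quadTensor_weight_zero, V22_eq_span_quadTensor]
  constructor
  · intro hw
    refine ⟨span_mono (Set.image_subset_range _ _) hw, fun l hl => ?_⟩
    have hfix : span ℂ (quadTensor '' {p | quadWeight p = 0})
        ≤ Module.End.eigenspace (tAct (dmat l) (dmat l)) 1 := span_le.mpr (by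
      rintro _ ⟨p, hp, rfl⟩
      simp [tAct_dmat_quadTensor hl, hp.out])
    simpa [Module.End.mem_eigenspace_iff] using hfix hw
  · rintro ⟨hw, hfix⟩
    obtain ⟨ζ, hζ⟩ : ∃ ζ : ℂ, IsPrimitiveRoot ζ 8 :=
      ⟨_, Complex.isPrimitiveRoot_exp 8 (by norm_num)⟩
    have hζ1 : ‖ζ‖ = 1 := hζ.norm'_eq_one (by norm_num)
    refine span_mono (Set.image_mono fun p => quadWeight_eq_zero_of_zpow_eq_one hζ) ?_
    exact Module.End.mem_span_image_of_mem_eigenspace _ _ _ (tAct_dmat_quadTensor hζ1) hw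
      (by simpa [Module.End.mem_eigenspace_iff] using hfix ζ hζ1)

theorem polyAct_Jmat_X0 : polyAct Jmat (X 0) = -X 1 := by simp [polyAct, Jmat]

theorem polyAct_Jmat_X1 : polyAct Jmat (X 1) = X 0 := by simp [polyAct, Jmat]

theorem polyAct_Kmat_X0 : polyAct Kmat (X 0) = Complex.I • X 1 := by
  simp [polyAct, Kmat, smul_eq_C_mul]

theorem polyAct_Kmat_X1 : polyAct Kmat (X 1) = Complex.I • X 0 := by
  simp [polyAct, Kmat, smul_eq_C_mul]

theorem tAct_JK_u1 : tAct Jmat Kmat u1 = -u3 := by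
  simp [tAct, u1, u3, sq, polyAct_mul, polyAct_Jmat_X0, polyAct_Kmat_X1, smul_smul,
    Complex.I_mul_I, tmul_neg]

theorem tAct_JK_u2 : tAct Jmat Kmat u2 = u2 := by
  simp [tAct, u2, polyAct_mul, polyAct_Jmat_X0, polyAct_Jmat_X1, polyAct_Kmat_X0,
    polyAct_Kmat_X1, smul_smul, Complex.I_mul_I, mul_comm, neg_tmul, tmul_neg]

theorem tAct_JK_u3 : tAct Jmat Kmat u3 = -u1 := by
  simp [tAct, u1, u3, sq, polyAct_mul, polyAct_Jmat_X1, polyAct_Kmat_X0, smul_smul,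
    Complex.I_mul_I, tmul_neg]

theorem mem_span_u13_u2_of_tAct_JK_eq {w : P2 ⊗[ℂ] P2} (hw : w ∈ span ℂ {u1, u2, u3})
    (hfix : tAct Jmat Kmat w = w) : w ∈ span ℂ {u1 - u3, u2} := by
  let v : Fin 3 → P2 ⊗[ℂ] P2 := ![u1 - u3, u2, u1 + u3]
  let μ : Fin 3 → ℂ := ![1, 1, -1]
  have hv : ∀ i, tAct Jmat Kmat (v i) = μ i • v i := by
    intro i
    fin_cases i <;> simp [v, μ, tAct_JK_u1, tAct_JK_u2, tAct_JK_u3, add_comm, sub_eq_add_neg]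
  have hv_mem : ∀ i, v i ∈ span ℂ (Set.range v) := fun i => subset_span ⟨i, rfl⟩
  have hspan : span ℂ {u1, u2, u3} ≤ span ℂ (Set.range v) := by
    rw [span_le]
    rintro _ (rfl | rfl | rfl)
    · have h : u1 = (2⁻¹ : ℂ) • (v 0 + v 2) := by simp [v]; module
      exact h ▸ smul_mem _ _ (add_mem (hv_mem 0) (hv_mem 2))
    · exact hv_mem 1
    · have h : u3 = (2⁻¹ : ℂ) • (v 2 - v 0) := by simp [v]; module
      exact h ▸ smul_mem _ _ (sub_mem (hv_mem 2) (hv_mem 0))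
  refine span_mono ?_ (Module.End.mem_span_image_of_mem_eigenspace _ v μ hv (hspan hw)
    (Module.End.mem_eigenspace_iff.mpr (by rw [one_smul, hfix])))
  rintro _ ⟨i, hi, rfl⟩
  fin_cases i
  · exact Or.inl rfl
  · exact Or.inr rfl
  · norm_num [μ] at hi

theorem mem_span_u13_u2_iff (w : P2 ⊗[ℂ] P2) : w ∈ span ℂ {u1 - u3, u2} ↔
    w ∈ span ℂ {u1, u2, u3} ∧ tAct Jmat Kmat w = w := by
  refine ⟨fun hw => ?_, fun ⟨hw, hfix⟩ => mem_span_u13_u2_of_tAct_JK_eq hw hfix⟩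
  have hle : span ℂ {u1 - u3, u2}
      ≤ span ℂ {u1, u2, u3} ⊓ Module.End.eigenspace (tAct Jmat Kmat) 1 := by
    rw [span_le]
    rintro _ (rfl | rfl)
    · exact ⟨sub_mem (subset_span (by simp)) (subset_span (by simp)),
        by simp [tAct_JK_u1, tAct_JK_u3, neg_add_eq_sub]⟩
    · exact ⟨subset_span (by simp), by simp [tAct_JK_u2]⟩
  simpa [Module.End.mem_eigenspace_iff] using hle hw

theorem linearIndependent_u : LinearIndependent ℂ ![u1, u2, u3] := by
  let b := (basisMonomials (Fin 2) ℂ).tensorProduct (basisMonomials (Fin 2) ℂ)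
  let x0x1 : Fin 2 →₀ ℕ := Finsupp.single 0 1 + Finsupp.single 1 1
  let e : Fin 3 → (Fin 2 →₀ ℕ) × (Fin 2 →₀ ℕ) :=
    ![(Finsupp.single 0 2, Finsupp.single 1 2), (x0x1, x0x1),
      (Finsupp.single 1 2, Finsupp.single 0 2)]
  have he : Function.Injective e := by
    intro i j h
    have h0 := congr_arg (fun d => d.1 0) h
    fin_cases i <;> fin_cases j <;> first | rfl | simp [e, x0x1] at h0
  have hb : b ∘ e = ![u1, u2, u3] := by
    ext i
    fin_cases i <;>
      simp [b, e, x0x1, u1, u2, u3, X, monomial_mul, monomial_pow, Finsupp.smul_single]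
  exact hb ▸ b.linearIndependent.comp e he

theorem linearIndependent_u13_u2 : LinearIndependent ℂ ![u1 - u3, u2] := by
  rw [LinearIndependent.pair_iff]
  intro s t hst
  have h := Fintype.linearIndependent_iff.mp linearIndependent_u ![s, t, -s]
    (by simp [Fin.sum_univ_three, ← hst, sub_eq_add_neg]; abel)
  exact ⟨h 0, h 1⟩

theorem finrank_span_u : Module.finrank ℂ (span ℂ {u1, u2, u3}) = 3 := by
  have h := finrank_span_eq_card linearIndependent_u
  rwa [Matrix.range_cons, Matrix.range_cons_cons_empty, Set.singleton_union,
    Fintype.card_fin] at h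

theorem finrank_span_u13_u2 : Module.finrank ℂ (span ℂ {u1 - u3, u2}) = 2 := by
  have h := finrank_span_eq_card linearIndependent_u13_u2
  rwa [Matrix.range_cons_cons_empty, Fintype.card_fin] at h

theorem statement16 :
    ({w : P2 ⊗[ℂ] P2 | w ∈ V22 ∧
        ∀ lam : ℂ, ‖lam‖ = 1 → tAct (dmat lam) (dmat lam) w = w}
      = ↑(Submodule.span ℂ {u1, u2, u3})) ∧
    Module.finrank ℂ ↥(Submodule.span ℂ {u1, u2, u3}) = 3 ∧
    ({w : P2 ⊗[ℂ] P2 | w ∈ V22 ∧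
        (∀ lam : ℂ, ‖lam‖ = 1 → tAct (dmat lam) (dmat lam) w = w) ∧
        tAct Jmat Kmat w = w}
      = ↑(Submodule.span ℂ {u1 - u3, u2})) ∧
    Module.finrank ℂ ↥(Submodule.span ℂ {u1 - u3, u2}) = 2 := by
  refine ⟨?_, finrank_span_u, ?_, finrank_span_u13_u2⟩
  · ext w
    exact (mem_span_u_iff w).symm
  · ext w
    rw [SetLike.mem_coe, mem_span_u13_u2_iff, mem_span_u_iff, and_assoc]
    rfl

end
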